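/- Let g be a linear functional on Ω_N given by g(x) = Σ_{z_{ij}=1} w_{ij} x_{ij}, and define d'(g) componentwise by d'_{ij}(g) = b(g) + f'_i(g) + m'_j(g), where b(g) = (σ_{++}²)^{-1} w_{++}, f'_i(g) = (σ_{i+}²)^{-1} w_{i+} − (σ_{++}²)^{-1} w_{++}, and m'_j(g) = (σ_{+j}²)^{-1} w_{+j} − (σ_{++}²)^{-1} w_{++}. Then ‖d'(g)‖_σ² = Σ_{i=1}^N w_{i+}² (σ_{i+}²)^{-1} + Σ_{j=1}^J w_{+j}² (σ_{+j}²)^{-1} + 2 Σ_{i=1}^N Σ_{j : z_{ij}=1} w_{i+} w_{+j} σ_{ij}² (σ_{i+}²)^{-1} (σ_{+j}²)^{-1} − 3 w_{++}² (σ_{++}²)^{-1}. -/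

import Mathlib

open Filter Finset MeasureTheory

noncomputable section

/-- The logistic function `t ↦ eᵗ/(1+eᵗ)`. -/
def logisticFn (t : ℝ) : ℝ := Real.exp t / (1 + Real.exp t)

/-- The Bernoulli variance `σ²(t) = eᵗ/(1+eᵗ)²` as a function of the logit `t`. -/
def varFn (t : ℝ) : ℝ := Real.exp t / (1 + Real.exp t) ^ 2

/-- Number of observed entries in row `i`, i.e. `Σ_{j<J} z_{ij}`. -/
def rowCount (J : ℕ) (z : ℕ → ℕ → Bool) (i : ℕ) : ℕ :=
  ((Finset.range J).filter fun j => z i j = true).card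

/-- Number of observed entries in column `j`, i.e. `Σ_{i<N} z_{ij}`. -/
def colCount (N : ℕ) (z : ℕ → ℕ → Bool) (j : ℕ) : ℕ :=
  ((Finset.range N).filter fun i => z i j = true).card

/-- `J_*`: the minimal number of observed entries per row. -/
def Jlow (N J : ℕ) (z : ℕ → ℕ → Bool) : ℕ := sInf (rowCount J z '' Set.Iio N)

/-- `J^*`: the maximal number of observed entries per row. -/
def Jhigh (N J : ℕ) (z : ℕ → ℕ → Bool) : ℕ := (Finset.range N).sup (rowCount J z)

/-- `N_*`: the minimal number of observed entries per column. -/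
def Nlow (N J : ℕ) (z : ℕ → ℕ → Bool) : ℕ := sInf (colCount N z '' Set.Iio J)

/-- `N^*`: the maximal number of observed entries per column. -/
def Nhigh (N J : ℕ) (z : ℕ → ℕ → Bool) : ℕ := (Finset.range J).sup (colCount N z)

/-- Total number of observed entries. -/
def obsCard (N J : ℕ) (z : ℕ → ℕ → Bool) : ℕ := ∑ i ∈ Finset.range N, rowCount J z i

/-- The connectedness chain between row `i` and column `j`:
there are `i₁,…,i_k < N` and `j₁,…,j_k < J` with
`z_{i,j₁} = z_{i₁,j₁} = z_{i₁,j₂} = z_{i₂,j₂} = ⋯ = z_{i_k,j_k} = z_{i_k,j} = 1`. -/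
def ConnectedPair (N J : ℕ) (z : ℕ → ℕ → Bool) (i j : ℕ) : Prop :=
  ∃ k : ℕ, 1 ≤ k ∧ ∃ I Jc : ℕ → ℕ,
    (∀ l, 1 ≤ l → l ≤ k → I l < N ∧ Jc l < J) ∧
    z i (Jc 1) = true ∧
    (∀ l, 1 ≤ l → l ≤ k → z (I l) (Jc l) = true) ∧
    (∀ l, 1 ≤ l → l + 1 ≤ k → z (I l) (Jc (l + 1)) = true) ∧
    z (I k) j = true

/-- Condition 3 (connectedness of the observed pattern). -/
def Cond3 (N J : ℕ) (z : ℕ → ℕ → Bool) : Prop :=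
  ∀ i < N, ∀ j < J, ConnectedPair N J z i j

/-- Condition 1, for a triangular array of missingness patterns indexed by `N`. -/
def Cond1 (Jn : ℕ → ℕ) (z : ℕ → ℕ → ℕ → Bool) : Prop :=
  (∃ k : ℝ, 0 < k ∧ ∀ N : ℕ,
      k * (N : ℝ) ^ ((2 : ℝ) / 3) ≤ (Nlow N (Jn N) (z N) : ℝ) ∧
      k * (Jn N : ℝ) ^ ((2 : ℝ) / 3) ≤ (Jlow N (Jn N) (z N) : ℝ)) ∧
  Tendsto (fun N : ℕ => Real.log N / (Jlow N (Jn N) (z N) : ℝ)) atTop (nhds 0) ∧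
  (∃ k₁ k₂ : ℝ, 0 < k₁ ∧ 0 < k₂ ∧ ∀ N : ℕ,
      k₁ * (Jlow N (Jn N) (z N) : ℝ) ≤ (Jhigh N (Jn N) (z N) : ℝ) ∧
      (Jhigh N (Jn N) (z N) : ℝ) ≤ k₂ * (Jlow N (Jn N) (z N) : ℝ))

/-- Condition 2 (uniform boundedness of the true parameters). -/
def Cond2 (Jn : ℕ → ℕ) (θs βs : ℕ → ℕ → ℝ) : Prop :=
  ∃ c : ℝ, ∀ N : ℕ, (∀ i < N, |θs N i| < c) ∧ (∀ j < Jn N, |βs N j| < c)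

/-- The Bernoulli 1-bit observation model: `Y N i j` are 0/1-valued, independent (for each `N`),
with success probability given by the logistic function of `θ*_i − β*_j`. -/
def BernModel {Ω' : Type*} [MeasurableSpace Ω'] (μ : Measure Ω') (Jn : ℕ → ℕ)
    (θs βs : ℕ → ℕ → ℝ) (Y : ℕ → ℕ → ℕ → Ω' → ℝ) : Prop :=
  (∀ N i j, Measurable (Y N i j)) ∧
  (∀ N i j ω, Y N i j ω = 0 ∨ Y N i j ω = 1) ∧
  (∀ N : ℕ, ∀ i < N, ∀ j < Jn N,
      μ {ω | Y N i j ω = 1} = ENNReal.ofReal (logisticFn (θs N i - βs N j))) ∧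
  (∀ N : ℕ, ProbabilityTheory.iIndepFun (m := fun _ : ℕ × ℕ => Real.measurableSpace)
      (fun p : ℕ × ℕ => Y N p.1 p.2) μ)

/-- The log-likelihood `l(θ, β) = Σ_{z_{ij}=1} [Y_{ij}(θ_i − β_j) − log(1 + exp(θ_i − β_j))]`. -/
def loglik (N J : ℕ) (z : ℕ → ℕ → Bool) (Y : ℕ → ℕ → ℝ) (p : (ℕ → ℝ) × (ℕ → ℝ)) : ℝ :=
  ∑ i ∈ Finset.range N, ∑ j ∈ Finset.range J,
    if z i j = true then Y i j * (p.1 i - p.2 j) - Real.log (1 + Real.exp (p.1 i - p.2 j)) else 0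

/-- `(θ, β)` is a maximum likelihood estimate: it maximizes the log-likelihood over the
constraint set `Σ_{i<N} θ_i = 0`. -/
def IsMLE (N J : ℕ) (z : ℕ → ℕ → Bool) (Y : ℕ → ℕ → ℝ) (θ β : ℕ → ℝ) : Prop :=
  (∑ i ∈ Finset.range N, θ i) = 0 ∧
  IsMaxOn (loglik N J z Y) {p : (ℕ → ℝ) × (ℕ → ℝ) | (∑ i ∈ Finset.range N, p.1 i) = 0} (θ, β)

/-- `X_N = O_p(a_N)`: boundedness in probability at rate `a_N`. -/
def IsBigOp {Ω' : Type*} [MeasurableSpace Ω'] (μ : Measure Ω') (X : ℕ → Ω' → ℝ)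
    (a : ℕ → ℝ) : Prop :=
  ∀ ε : ℝ, 0 < ε → ∃ K : ℝ, 0 < K ∧
    ∀ᶠ N in atTop, μ {ω | K * a N < |X N ω|} < ENNReal.ofReal ε

/-- `max_{i<n} |g i|`. -/
def supAbs (n : ℕ) (g : ℕ → ℝ) : ℝ := sSup ((fun i => |g i|) '' Set.Iio n)

/-- `max_{i<n, j<m} |g i j|`. -/
def supAbs2 (n m : ℕ) (g : ℕ → ℕ → ℝ) : ℝ :=
  sSup ((fun p : ℕ × ℕ => |g p.1 p.2|) '' (Set.Iio n ×ˢ Set.Iio m))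

/-- The space `Ω_N` of vectors of observed entries of the form `x_{ij} = θ_i − β_j`
with `Σ_{i<N} θ_i = 0` (represented as functions, only the observed entries matter). -/
def OmegaSp (N J : ℕ) (z : ℕ → ℕ → Bool) : Set (ℕ → ℕ → ℝ) :=
  {x | ∃ θ β : ℕ → ℝ, (∑ i ∈ Finset.range N, θ i) = 0 ∧
    ∀ i < N, ∀ j < J, z i j = true → x i j = θ i - β j}

/-- The variance-weighted inner product `[x, y]_σ = Σ_{z_{ij}=1} x_{ij} σ_{ij}² y_{ij}`. -/
def ipSig (N J : ℕ) (z : ℕ → ℕ → Bool) (s : ℕ → ℕ → ℝ) (x y : ℕ → ℕ → ℝ) : ℝ :=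
  ∑ i ∈ Finset.range N, ∑ j ∈ Finset.range J, if z i j = true then x i j * s i j * y i j else 0

/-- The norm `‖x‖_σ`. -/
def normSig (N J : ℕ) (z : ℕ → ℕ → Bool) (s : ℕ → ℕ → ℝ) (x : ℕ → ℕ → ℝ) : ℝ :=
  Real.sqrt (ipSig N J z s x x)

/-- A linear functional on `Ω_N` with coefficients `w`: `g(x) = Σ_{z_{ij}=1} w_{ij} x_{ij}`. -/
def applyW (N J : ℕ) (z : ℕ → ℕ → Bool) (w x : ℕ → ℕ → ℝ) : ℝ :=
  ∑ i ∈ Finset.range N, ∑ j ∈ Finset.range J, if z i j = true then w i j * x i j else 0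

/-- `σ(g) = sup{|g(x)| : x ∈ Ω_N, ‖x‖_σ ≤ 1}`. -/
def sigOf (N J : ℕ) (z : ℕ → ℕ → Bool) (s : ℕ → ℕ → ℝ) (w : ℕ → ℕ → ℝ) : ℝ :=
  sSup ((fun x => |applyW N J z w x|) '' {x | x ∈ OmegaSp N J z ∧ normSig N J z s x ≤ 1})

/-- `‖x‖_σ(A)`: the smallest `c ≥ 0` with `|g(x)| ≤ c σ(g)` for all `g ∈ A`. -/
def normOn (N J : ℕ) (z : ℕ → ℕ → Bool) (s : ℕ → ℕ → ℝ) (A : Set (ℕ → ℕ → ℝ))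
    (x : ℕ → ℕ → ℝ) : ℝ :=
  sInf {c : ℝ | 0 ≤ c ∧ ∀ w ∈ A, |applyW N J z w x| ≤ c * sigOf N J z s w}

/-- The matrix of Bernoulli variances `σ_{ij}² = varFn (θ_i − β_j)`. -/
def sigMat (θ β : ℕ → ℝ) : ℕ → ℕ → ℝ := fun i j => varFn (θ i - β j)

/-- Row sums `σ_{i+}² = Σ_j z_{ij} σ_{ij}²`. -/
def sRow (J : ℕ) (z : ℕ → ℕ → Bool) (s : ℕ → ℕ → ℝ) (i : ℕ) : ℝ :=
  ∑ j ∈ Finset.range J, if z i j = true then s i j else 0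

/-- Column sums `σ_{+j}² = Σ_i z_{ij} σ_{ij}²`. -/
def sCol (N : ℕ) (z : ℕ → ℕ → Bool) (s : ℕ → ℕ → ℝ) (j : ℕ) : ℝ :=
  ∑ i ∈ Finset.range N, if z i j = true then s i j else 0

/-- `σ_{++}² = Σ_{z_{ij}=1} σ_{ij}²`. -/
def sTot (N J : ℕ) (z : ℕ → ℕ → Bool) (s : ℕ → ℕ → ℝ) : ℝ :=
  ∑ i ∈ Finset.range N, sRow J z s i

/-- `w_{i+} = Σ_{j : z_{ij}=1} w_{ij}`. -/
def wRow (J : ℕ) (z : ℕ → ℕ → Bool) (w : ℕ → ℕ → ℝ) (i : ℕ) : ℝ :=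
  ∑ j ∈ Finset.range J, if z i j = true then w i j else 0

/-- `w_{+j} = Σ_{i : z_{ij}=1} w_{ij}`. -/
def wCol (N : ℕ) (z : ℕ → ℕ → Bool) (w : ℕ → ℕ → ℝ) (j : ℕ) : ℝ :=
  ∑ i ∈ Finset.range N, if z i j = true then w i j else 0

/-- `w_{++} = Σ_{z_{ij}=1} w_{ij}`. -/
def wTot (N J : ℕ) (z : ℕ → ℕ → Bool) (w : ℕ → ℕ → ℝ) : ℝ :=
  ∑ i ∈ Finset.range N, wRow J z w i

/-- `U = U_N(y, v)`: the element of `Ω_N` defined by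
`[x, U]_σ = Σ_{z_{ij}=1} x_{ij} (σ²(y_{ij}) − σ_{ij}²) v_{ij}` for all `x ∈ Ω_N`. -/
def IsU (N J : ℕ) (z : ℕ → ℕ → Bool) (s : ℕ → ℕ → ℝ) (y v U : ℕ → ℕ → ℝ) : Prop :=
  U ∈ OmegaSp N J z ∧ ∀ x ∈ OmegaSp N J z,
    ipSig N J z s x U = ∑ i ∈ Finset.range N, ∑ j ∈ Finset.range J,
      if z i j = true then x i j * (varFn (y i j) - s i j) * v i j else 0

/-- `R = R_N`: the element of `Ω_N` defined by
`[x, R]_σ = Σ_{z_{ij}=1} x_{ij} (Y_{ij} − E_{ij})` for all `x ∈ Ω_N`. -/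
def IsR (N J : ℕ) (z : ℕ → ℕ → Bool) (s : ℕ → ℕ → ℝ) (E Yo R : ℕ → ℕ → ℝ) : Prop :=
  R ∈ OmegaSp N J z ∧ ∀ x ∈ OmegaSp N J z,
    ipSig N J z s x R = ∑ i ∈ Finset.range N, ∑ j ∈ Finset.range J,
      if z i j = true then x i j * (Yo i j - E i j) else 0

/-- The coefficient array `w` represents the linear functional
`(θ_i − β_j : z_{ij} = 1) ↦ g(θ, β)` on `Ω_N`. -/
def RepFunc (N J : ℕ) (z : ℕ → ℕ → Bool) (w : ℕ → ℕ → ℝ)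
    (g : (ℕ → ℝ) → (ℕ → ℝ) → ℝ) : Prop :=
  ∀ θ β : ℕ → ℝ, (∑ i ∈ Finset.range N, θ i) = 0 →
    applyW N J z w (fun i j => θ i - β j) = g θ β

/-- Coefficients of the point-evaluation functional `f_{ij}(x) = x_{ij}`. -/
def pointW (i j : ℕ) : ℕ → ℕ → ℝ := fun i' j' => if i' = i ∧ j' = j then 1 else 0

/-- The set `A_p` of point-evaluation functionals at observed entries. -/
def Apoint (N J : ℕ) (z : ℕ → ℕ → Bool) : Set (ℕ → ℕ → ℝ) :=
  {w | ∃ i < N, ∃ j < J, z i j = true ∧ w = pointW i j}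

/-- The set `A_β` of (coefficient arrays of) the functionals `g_j(x) = β_j`, `j < J`. -/
def Abeta (N J : ℕ) (z : ℕ → ℕ → Bool) : Set (ℕ → ℕ → ℝ) :=
  {w | ∃ j < J, RepFunc N J z w fun _ β => β j}

/-- The set `A_θ` of (coefficient arrays of) the functionals `g_i(x) = θ_i`, `i < N`. -/
def Atheta (N J : ℕ) (z : ℕ → ℕ → Bool) : Set (ℕ → ℕ → ℝ) :=
  {w | ∃ i < N, RepFunc N J z w fun θ _ => θ i}

end

/-! With `a_i = w_{i+}/σ_{i+}²`, `c_j = w_{+j}/σ_{+j}²` and `t = w_{++}/σ_{++}²` one has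
`d'_{ij}(g) = a_i + c_j - t`. Expanding `Σ σ_{ij}² (a_i + c_j - t)²` over the observed entries
and summing out rows and columns gives `Σ a_i² σ_{i+}² + Σ c_j² σ_{+j}² + t² σ_{++}²` plus the
cross terms, and `a_i σ_{i+}² = w_{i+}`, `c_j σ_{+j}² = w_{+j}` turn the three `t`-terms
into `(1 - 2 - 2) w_{++}²/σ_{++}²`. An empty row has `σ_{i+}² = 0` and `0⁻¹ = 0`, but
then also `w_{i+} = 0` because the weights are positive, so the cancellation survives. -/

lemma varFn_pos (t : ℝ) : 0 < varFn t := by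
  unfold varFn
  positivity

section ObservedSums

variable {N J : ℕ} {z : ℕ → ℕ → Bool} {s : ℕ → ℕ → ℝ}

lemma sum_obs_mul_eq_sum_mul_sRow (f : ℕ → ℝ) :
    (∑ i ∈ range N, ∑ j ∈ range J, f i * (if z i j = true then s i j else 0))
      = ∑ i ∈ range N, f i * sRow J z s i := by
  simp only [sRow, mul_sum]

lemma sum_obs_mul_eq_sum_mul_sCol (g : ℕ → ℝ) :
    (∑ i ∈ range N, ∑ j ∈ range J, g j * (if z i j = true then s i j else 0))
      = ∑ j ∈ range J, g j * sCol N z s j := by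
  rw [sum_comm]
  simp only [sCol, mul_sum]

lemma sum_obs_const_mul_eq_mul_sTot (t : ℝ) :
    (∑ i ∈ range N, ∑ j ∈ range J, t * (if z i j = true then s i j else 0))
      = t * sTot N J z s := by
  simp only [sTot, sRow, mul_sum]

lemma ipSig_add_sub_self (a c : ℕ → ℝ) (t : ℝ) :
    ipSig N J z s (fun i j => a i + c j - t) (fun i j => a i + c j - t)
      = (∑ i ∈ range N, a i ^ 2 * sRow J z s i)
        + (∑ j ∈ range J, c j ^ 2 * sCol N z s j)
        + t ^ 2 * sTot N J z s
        + 2 * (∑ i ∈ range N, ∑ j ∈ range J,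
            if z i j = true then a i * c j * s i j else 0)
        - 2 * t * (∑ i ∈ range N, a i * sRow J z s i)
        - 2 * t * (∑ j ∈ range J, c j * sCol N z s j) := by
  rw [← sum_obs_mul_eq_sum_mul_sRow, ← sum_obs_mul_eq_sum_mul_sCol,
    ← sum_obs_const_mul_eq_mul_sTot, ← sum_obs_mul_eq_sum_mul_sRow,
    ← sum_obs_mul_eq_sum_mul_sCol]
  simp only [ipSig, mul_sum, ← sum_add_distrib, ← sum_sub_distrib]
  refine sum_congr rfl fun i _ => sum_congr rfl fun j _ => ?_
  split_ifs <;> ring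

variable (hs : ∀ i j, z i j = true → 0 < s i j)
include hs

lemma wRow_eq_zero_of_sRow_eq_zero (w : ℕ → ℕ → ℝ) (i : ℕ) (h : sRow J z s i = 0) :
    wRow J z w i = 0 := by
  have hnonneg : ∀ j ∈ range J, 0 ≤ (if z i j = true then s i j else 0) := fun j _ => by
    split_ifs with hz
    exacts [(hs i j hz).le, le_rfl]
  refine sum_eq_zero fun j hj => ?_
  have := (sum_eq_zero_iff_of_nonneg hnonneg).mp h j hj
  split_ifs at this ⊢ with hz
  exacts [absurd this (hs i j hz).ne', rfl]

lemma wCol_eq_zero_of_sCol_eq_zero (w : ℕ → ℕ → ℝ) (j : ℕ) (h : sCol N z s j = 0) :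
    wCol N z w j = 0 :=
  wRow_eq_zero_of_sRow_eq_zero (z := fun j i => z i j) (s := fun j i => s i j)
    (fun j i => hs i j) (fun j i => w i j) j h

lemma inv_sRow_mul_wRow_mul_sRow (w : ℕ → ℕ → ℝ) (i : ℕ) :
    (sRow J z s i)⁻¹ * wRow J z w i * sRow J z s i = wRow J z w i := by
  rw [inv_mul_eq_div]
  exact div_mul_cancel_of_imp (wRow_eq_zero_of_sRow_eq_zero hs w i)

lemma inv_sCol_mul_wCol_mul_sCol (w : ℕ → ℕ → ℝ) (j : ℕ) :
    (sCol N z s j)⁻¹ * wCol N z w j * sCol N z s j = wCol N z w j := by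
  rw [inv_mul_eq_div]
  exact div_mul_cancel_of_imp (wCol_eq_zero_of_sCol_eq_zero hs w j)

end ObservedSums

lemma sum_wCol_eq_sum_wRow (N J : ℕ) (z : ℕ → ℕ → Bool) (w : ℕ → ℕ → ℝ) :
    ∑ j ∈ range J, wCol N z w j = ∑ i ∈ range N, wRow J z w i :=
  sum_comm

lemma inv_mul_sq_mul_self {K : Type*} [Field K] (x y : K) : (x⁻¹ * y) ^ 2 * x = y ^ 2 * x⁻¹ := by
  rcases eq_or_ne x 0 with rfl | hx
  · simp
  · field_simp

/-- **Lemma (norm of the explicit approximation `d'(g)`).** With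
`d'_{ij}(g) = b(g) + f'_i(g) + m'_j(g)`, where `b(g) = (σ_{++}²)⁻¹ w_{++}`,
`f'_i(g) = (σ_{i+}²)⁻¹ w_{i+} − (σ_{++}²)⁻¹ w_{++}` and
`m'_j(g) = (σ_{+j}²)⁻¹ w_{+j} − (σ_{++}²)⁻¹ w_{++}`, one has
`‖d'(g)‖_σ² = Σ_i w_{i+}²(σ_{i+}²)⁻¹ + Σ_j w_{+j}²(σ_{+j}²)⁻¹
  + 2 Σ_{z_{ij}=1} w_{i+} w_{+j} σ_{ij}² (σ_{i+}²)⁻¹ (σ_{+j}²)⁻¹ − 3 w_{++}² (σ_{++}²)⁻¹`. -/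
theorem norm_sq_of_explicit_approximation
    (N J : ℕ) (z : ℕ → ℕ → Bool) (θs βs : ℕ → ℝ) (w : ℕ → ℕ → ℝ) :
    ipSig N J z (sigMat θs βs)
        (fun i j =>
          (sTot N J z (sigMat θs βs))⁻¹ * wTot N J z w
          + ((sRow J z (sigMat θs βs) i)⁻¹ * wRow J z w i
              - (sTot N J z (sigMat θs βs))⁻¹ * wTot N J z w)
          + ((sCol N z (sigMat θs βs) j)⁻¹ * wCol N z w j
              - (sTot N J z (sigMat θs βs))⁻¹ * wTot N J z w))
        (fun i j =>
          (sTot N J z (sigMat θs βs))⁻¹ * wTot N J z w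
          + ((sRow J z (sigMat θs βs) i)⁻¹ * wRow J z w i
              - (sTot N J z (sigMat θs βs))⁻¹ * wTot N J z w)
          + ((sCol N z (sigMat θs βs) j)⁻¹ * wCol N z w j
              - (sTot N J z (sigMat θs βs))⁻¹ * wTot N J z w))
      = (∑ i ∈ Finset.range N, wRow J z w i ^ 2 * (sRow J z (sigMat θs βs) i)⁻¹)
        + (∑ j ∈ Finset.range J, wCol N z w j ^ 2 * (sCol N z (sigMat θs βs) j)⁻¹)
        + 2 * (∑ i ∈ Finset.range N, ∑ j ∈ Finset.range J,
            if z i j = true then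
              wRow J z w i * wCol N z w j * sigMat θs βs i j
                * (sRow J z (sigMat θs βs) i)⁻¹ * (sCol N z (sigMat θs βs) j)⁻¹
            else 0)
        - 3 * wTot N J z w ^ 2 * (sTot N J z (sigMat θs βs))⁻¹ := by
  have hs : ∀ i j, z i j = true → 0 < sigMat θs βs i j := fun i j _ => varFn_pos _
  have hd : ∀ t a c : ℝ, t + (a - t) + (c - t) = a + c - t := fun _ _ _ => by ring
  have hcross : ∀ x y u v r : ℝ, u⁻¹ * x * (v⁻¹ * y) * r = x * y * r * u⁻¹ * v⁻¹ :=
    fun _ _ _ _ _ => by ring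
  simp only [hd, ipSig_add_sub_self, inv_mul_sq_mul_self, inv_sRow_mul_wRow_mul_sRow hs,
    inv_sCol_mul_wCol_mul_sCol hs, sum_wCol_eq_sum_wRow, wTot, hcross]
  ring
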